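/- Fix θ ∈ ℝ^{k+1} and let 𝒜 be a subset of the collection 𝒦 of all nonempty subsets of J. If γ_{+U}(θ) < 1 and γ_{0U}(θ) < 1 for every U ∈ 𝒦∖𝒜, and φ_{+U'}(θ) < ∞ and φ_{0U'}(θ) < ∞ for every U' ∈ 𝒜, then Σ_{U ∈ 𝒦∖𝒜} [(1 − γ_{+U}(θ)) φ_{+U}(θ) + (1 − γ_{0U}(θ)) φ_{0U}(θ)] ≤ Σ_{U' ∈ 𝒜} [(γ_{+U'}(θ) − 1) φ_{+U'}(θ) + (γ_{0U'}(θ) − 1) φ_{0U'}(θ)] < ∞. -/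

import Mathlib

open Filter Topology
open scoped ENNReal

noncomputable section

/-- Traffic intensity ρ = λ / Σ μᵢ. -/
def rho (k : ℕ) (lam : ℝ) (μ : Fin k → ℝ) : ℝ := lam / ∑ i, μ i

/-- Index set of the shortest queues: the zero coordinates of the difference vector. -/
def zeroSet (k : ℕ) (y : Fin k → ℕ) : Finset (Fin k) :=
  Finset.univ.filter (fun i => y i = 0)

/-- One-step transition probability of the uniformized JSQ chain `Z = (M, Y)` on
`ℕ × (Fin k → ℕ)`, where `M` is the minimum queue length and `Y` the vector of
differences from the minimum. -/
def jsqP (k : ℕ) (lam : ℝ) (μ : Fin k → ℝ) (s s' : ℕ × (Fin k → ℕ)) : ℝ :=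
  (if (zeroSet k s.2).card = 1 then
      (if s' = (s.1 + 1, fun j => s.2 j - 1) then lam else 0)
    else
      ∑ i ∈ zeroSet k s.2,
        (if s' = (s.1, Function.update s.2 i 1) then lam / (zeroSet k s.2).card else 0))
  + (∑ j ∈ (zeroSet k s.2)ᶜ,
      (if s' = (s.1, Function.update s.2 j (s.2 j - 1)) then μ j else 0))
  + (∑ i ∈ zeroSet k s.2,
      (if s' = (if s.1 = 0 then s else (s.1 - 1, fun j => if j = i then 0 else s.2 j + 1))
        then μ i else 0))

/-- The exponential weight `e^{θ·Z}` for `θ ∈ ℝ^{k+1}` and a state `Z = (m, y)`. -/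
def expWeight (k : ℕ) (θ : Fin (k + 1) → ℝ) (s : ℕ × (Fin k → ℕ)) : ℝ :=
  Real.exp (θ 0 * (s.1 : ℝ) + ∑ i : Fin k, θ i.succ * (s.2 i : ℝ))

/-- The stationary moment generating function `φ(θ) = E[e^{θ·Z}] ∈ [0,∞]`. -/
def phi (k : ℕ) (π : ℕ × (Fin k → ℕ) → ℝ) (θ : Fin (k + 1) → ℝ) : ℝ≥0∞ :=
  ∑' s : ℕ × (Fin k → ℕ), ENNReal.ofReal (π s * expWeight k θ s)

/-- `φ_{+U}(θ) = E[e^{θ·Z} 1(Z ∈ S_{+U})]`. -/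
def phiPlus (k : ℕ) (π : ℕ × (Fin k → ℕ) → ℝ) (U : Finset (Fin k))
    (θ : Fin (k + 1) → ℝ) : ℝ≥0∞ :=
  ∑' s : ℕ × (Fin k → ℕ),
    if 1 ≤ s.1 ∧ zeroSet k s.2 = U then ENNReal.ofReal (π s * expWeight k θ s) else 0

/-- `φ_{0U}(θ) = E[e^{θ·Z} 1(Z ∈ S_{0U})]`. -/
def phiZero (k : ℕ) (π : ℕ × (Fin k → ℕ) → ℝ) (U : Finset (Fin k))
    (θ : Fin (k + 1) → ℝ) : ℝ≥0∞ :=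
  ∑' s : ℕ × (Fin k → ℕ),
    if s.1 = 0 ∧ zeroSet k s.2 = U then ENNReal.ofReal (π s * expWeight k θ s) else 0

/-- The mgf `γ_{+U}(θ)` of the one-step increment from states in `S_{+U}`. -/
def gammaPlus (k : ℕ) (lam : ℝ) (μ : Fin k → ℝ) (U : Finset (Fin k))
    (θ : Fin (k + 1) → ℝ) : ℝ :=
  (if U.card = 1 then lam * Real.exp (θ 0 - ∑ j ∈ Uᶜ, θ j.succ)
    else ∑ i ∈ U, (lam / U.card) * Real.exp (θ i.succ))
  + ∑ j ∈ Uᶜ, μ j * Real.exp (-θ j.succ)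
  + ∑ i ∈ U, μ i * Real.exp (-θ 0 + ∑ j ∈ Finset.univ.erase i, θ j.succ)

/-- The mgf `γ_{0U}(θ)` of the one-step increment from states in `S_{0U}`. -/
def gammaZero (k : ℕ) (lam : ℝ) (μ : Fin k → ℝ) (U : Finset (Fin k))
    (θ : Fin (k + 1) → ℝ) : ℝ :=
  (if U.card = 1 then lam * Real.exp (θ 0 - ∑ j ∈ Uᶜ, θ j.succ)
    else ∑ i ∈ U, (lam / U.card) * Real.exp (θ i.succ))
  + ∑ j ∈ Uᶜ, μ j * Real.exp (-θ j.succ)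
  + ∑ i ∈ U, μ i

end

/-!
Write `γ(s)` for `γ_{0U}(θ)` or `γ_{+U}(θ)` according to the class of the state `s`. One step of
the chain multiplies `e^{θ·s}` by the exponential of the increment, so
`E[e^{θ·Z₁} | Z₀ = s] = γ(s) e^{θ·s}`. If `E[e^{θ·Z}]` were known to be finite, stationarity would
give `E[(1 - γ(Z)) e^{θ·Z}] = 0`, which is the claim after splitting by classes. Finiteness is the
whole difficulty: applying stationarity to the bounded functions `min(e^{θ·Z}, n)` gives instead
`E[(1 - γ(Z))⁺ e^{θ·Z}] ≤ E[(γ(Z) - 1)⁺ e^{θ·Z}]` in `[0, ∞]`. The right side only involves the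
classes in `𝒜`, hence is finite, so the `φ` of every class outside `𝒜` (where `1 - γ > 0`) is
finite too, and the inequality can be read in `ℝ`.
-/

section StationaryDrift

variable {α : Type*} {π : α → ℝ≥0∞} {P : α → α → ℝ≥0∞} {V b c : α → ℝ≥0∞}

theorem tsum_mul_tsum_mul_eq_of_stationary (hstat : ∀ s', ∑' s, π s * P s s' = π s')
    (f : α → ℝ≥0∞) : ∑' s, π s * ∑' s', P s s' * f s' = ∑' s', π s' * f s' := by
  simp_rw [← ENNReal.tsum_mul_left, ← mul_assoc]
  rw [ENNReal.tsum_comm]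
  simp_rw [ENNReal.tsum_mul_right, hstat]

theorem tsum_mul_min_add_ite_le {p W : α → ℝ≥0∞} {w d e : ℝ≥0∞} (n : ℝ≥0∞)
    (hp : ∑' a, p a ≤ 1) (h : ∑' a, p a * W a + e ≤ w + d) :
    ∑' a, p a * min (W a) n + (if w ≤ n then e else 0) ≤ min w n + d := by
  split_ifs with hwn
  · calc ∑' a, p a * min (W a) n + e ≤ ∑' a, p a * W a + e := by
          gcongr; exact min_le_left _ _
      _ ≤ w + d := h
      _ = min w n + d := by rw [min_eq_left hwn]
  · calc ∑' a, p a * min (W a) n + 0 ≤ (∑' a, p a) * n := by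
          rw [add_zero, ← ENNReal.tsum_mul_right]; gcongr; exact min_le_right _ _
      _ ≤ n := mul_le_of_le_one_left' hp
      _ = min w n := (min_eq_right (not_le.mp hwn).le).symm
      _ ≤ min w n + d := le_self_add

theorem tsum_mul_ite_le_of_drift {n : ℝ≥0∞} (hn : n ≠ ∞) (hπ : ∑' s, π s ≠ ∞)
    (hstat : ∀ s', ∑' s, π s * P s s' = π s') (hrow : ∀ s, π s ≠ 0 → ∑' s', P s s' ≤ 1)
    (hdrift : ∀ s, π s ≠ 0 → ∑' s', P s s' * V s' + c s ≤ V s + b s) :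
    ∑' s, π s * (if V s ≤ n then c s else 0) ≤ ∑' s, π s * b s := by
  have hstep : ∀ s, π s * (∑' s', P s s' * min (V s') n + if V s ≤ n then c s else 0)
      ≤ π s * (min (V s) n + b s) := by
    intro s
    rcases eq_or_ne (π s) 0 with hs | hs
    · simp [hs]
    exact mul_le_mul_right (tsum_mul_min_add_ite_le n (hrow s hs) (hdrift s hs)) _
  have hsum := ENNReal.tsum_le_tsum hstep
  simp_rw [mul_add] at hsum
  rw [ENNReal.tsum_add, ENNReal.tsum_add, tsum_mul_tsum_mul_eq_of_stationary hstat] at hsum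
  have hfin : ∑' s, π s * min (V s) n ≠ ∞ := by
    refine ne_top_of_le_ne_top (ENNReal.mul_ne_top hπ hn) ?_
    rw [← ENNReal.tsum_mul_right]; gcongr; exact min_le_right _ _
  exact (ENNReal.add_le_add_iff_left hfin).mp hsum

theorem tsum_mul_le_of_drift (hπ : ∑' s, π s ≠ ∞)
    (hstat : ∀ s', ∑' s, π s * P s s' = π s') (hrow : ∀ s, π s ≠ 0 → ∑' s', P s s' ≤ 1)
    (hV : ∀ s, V s ≠ ∞) (hdrift : ∀ s, π s ≠ 0 → ∑' s', P s s' * V s' + c s ≤ V s + b s) :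
    ∑' s, π s * c s ≤ ∑' s, π s * b s := by
  rw [ENNReal.tsum_eq_iSup_sum]
  refine iSup_le fun I => ?_
  obtain ⟨n, hn⟩ := ENNReal.exists_nat_gt (ENNReal.sum_ne_top.mpr fun s (_ : s ∈ I) => hV s)
  calc ∑ s ∈ I, π s * c s = ∑ s ∈ I, π s * (if V s ≤ n then c s else 0) := by
        refine Finset.sum_congr rfl fun s hs => ?_
        rw [if_pos ((Finset.single_le_sum (fun _ _ => bot_le) hs).trans hn.le)]
    _ ≤ ∑' s, π s * (if V s ≤ n then c s else 0) := ENNReal.sum_le_tsum I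
    _ ≤ ∑' s, π s * b s :=
        tsum_mul_ite_le_of_drift (ENNReal.natCast_ne_top n) hπ hstat hrow hdrift

end StationaryDrift

theorem ENNReal.ofReal_add_ofReal_one_sub {x : ℝ} (hx : 0 ≤ x) :
    ENNReal.ofReal x + ENNReal.ofReal (1 - x) = 1 + ENNReal.ofReal (x - 1) := by
  rcases le_total x 1 with h | h
  · rw [ENNReal.ofReal_of_nonpos (sub_nonpos.2 h), add_zero,
      ← ENNReal.ofReal_add hx (sub_nonneg.2 h), add_sub_cancel, ENNReal.ofReal_one]
  · rw [ENNReal.ofReal_of_nonpos (sub_nonpos.2 h), add_zero, ← ENNReal.ofReal_one,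
      ← ENNReal.ofReal_add zero_le_one (sub_nonneg.2 h), add_sub_cancel]

section SignedWeights

variable {ι : Type*} {S : Finset ι} {a b : ι → ℝ} {x y : ι → ℝ≥0∞}

theorem ne_top_of_sum_ofReal_mul_le {B : Finset ι} (hB : ∀ i ∈ B, x i ≠ ∞ ∧ y i ≠ ∞)
    (hpos : ∀ i ∈ S, i ∉ B → 0 < a i ∧ 0 < b i)
    (h : ∑ i ∈ S, (ENNReal.ofReal (a i) * x i + ENNReal.ofReal (b i) * y i)
      ≤ ∑ i ∈ S, (ENNReal.ofReal (-a i) * x i + ENNReal.ofReal (-b i) * y i)) :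
    ∀ i ∈ S, x i ≠ ∞ ∧ y i ≠ ∞ := by
  intro i hi
  by_cases hiB : i ∈ B
  · exact hB i hiB
  have hR : ∑ i ∈ S, (ENNReal.ofReal (-a i) * x i + ENNReal.ofReal (-b i) * y i) ≠ ∞ := by
    refine ENNReal.sum_ne_top.mpr fun j hj => ?_
    by_cases hjB : j ∈ B
    · exact ENNReal.add_ne_top.mpr ⟨ENNReal.mul_ne_top ENNReal.ofReal_ne_top (hB j hjB).1,
        ENNReal.mul_ne_top ENNReal.ofReal_ne_top (hB j hjB).2⟩
    · obtain ⟨ha, hb⟩ := hpos j hj hjB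
      simp [ENNReal.ofReal_of_nonpos, ha.le, hb.le]
  have hterm := ENNReal.add_ne_top.mp (ne_top_of_le_ne_top hR
    ((Finset.single_le_sum (fun _ _ => bot_le) hi).trans h))
  obtain ⟨ha, hb⟩ := hpos i hi hiB
  exact ⟨(ENNReal.lt_top_of_mul_ne_top_right hterm.1 (ENNReal.ofReal_pos.2 ha).ne').ne,
    (ENNReal.lt_top_of_mul_ne_top_right hterm.2 (ENNReal.ofReal_pos.2 hb).ne').ne⟩

theorem toReal_ofReal_mul_sub_toReal_ofReal_neg_mul (c : ℝ) (z : ℝ≥0∞) :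
    (ENNReal.ofReal c * z).toReal - (ENNReal.ofReal (-c) * z).toReal = c * z.toReal := by
  rw [ENNReal.toReal_mul, ENNReal.toReal_mul, ENNReal.toReal_ofReal', ENNReal.toReal_ofReal']
  rcases le_total 0 c with hc | hc <;> simp [hc]

theorem sum_mul_toReal_nonpos_of_sum_ofReal_mul_le (hfin : ∀ i ∈ S, x i ≠ ∞ ∧ y i ≠ ∞)
    (h : ∑ i ∈ S, (ENNReal.ofReal (a i) * x i + ENNReal.ofReal (b i) * y i)
      ≤ ∑ i ∈ S, (ENNReal.ofReal (-a i) * x i + ENNReal.ofReal (-b i) * y i)) :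
    ∑ i ∈ S, (a i * (x i).toReal + b i * (y i).toReal) ≤ 0 := by
  have htoReal : ∀ c d : ι → ℝ,
      (∑ i ∈ S, (ENNReal.ofReal (c i) * x i + ENNReal.ofReal (d i) * y i)).toReal
        = ∑ i ∈ S, ((ENNReal.ofReal (c i) * x i).toReal + (ENNReal.ofReal (d i) * y i).toReal) := by
    intro c d
    have hx i (hi : i ∈ S) : ENNReal.ofReal (c i) * x i ≠ ∞ :=
      ENNReal.mul_ne_top ENNReal.ofReal_ne_top (hfin i hi).1
    have hy i (hi : i ∈ S) : ENNReal.ofReal (d i) * y i ≠ ∞ :=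
      ENNReal.mul_ne_top ENNReal.ofReal_ne_top (hfin i hi).2
    rw [ENNReal.toReal_sum fun i hi => ENNReal.add_ne_top.mpr ⟨hx i hi, hy i hi⟩]
    exact Finset.sum_congr rfl fun i hi => ENNReal.toReal_add (hx i hi) (hy i hi)
  have hle := ENNReal.toReal_mono (ENNReal.sum_ne_top.mpr fun i hi => ENNReal.add_ne_top.mpr
    ⟨ENNReal.mul_ne_top ENNReal.ofReal_ne_top (hfin i hi).1,
      ENNReal.mul_ne_top ENNReal.ofReal_ne_top (hfin i hi).2⟩) h
  rw [htoReal, htoReal, ← sub_nonpos, ← Finset.sum_sub_distrib] at hle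
  simpa only [add_sub_add_comm, toReal_ofReal_mul_sub_toReal_ofReal_neg_mul] using hle

end SignedWeights

section HasSumDirac

variable {α ι R : Type*} [Semiring R] [TopologicalSpace R]

theorem hasSum_ite_eq_mul [DecidableEq α] (t : α) (c : R) (w : α → R) :
    HasSum (fun a => (if a = t then c else 0) * w a) (c * w t) := by
  convert hasSum_ite_eq t (c * w t) using 2 with a
  split_ifs with h <;> simp [h]

theorem hasSum_sum_ite_eq_mul [ContinuousAdd R] [DecidableEq α] (I : Finset ι) (t : ι → α)
    (c : ι → R) (w : α → R) :
    HasSum (fun a => (∑ i ∈ I, if a = t i then c i else 0) * w a) (∑ i ∈ I, c i * w (t i)) := by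
  simp only [Finset.sum_mul]
  exact hasSum_sum fun i _ => hasSum_ite_eq_mul (t i) (c i) w

end HasSumDirac

namespace JSQ

variable {k : ℕ} {lam : ℝ} {μ : Fin k → ℝ} (θ : Fin (k + 1) → ℝ)

theorem expWeight_pos (s : ℕ × (Fin k → ℕ)) : 0 < expWeight k θ s := Real.exp_pos _

theorem expWeight_eq_exp_mul (s s' : ℕ × (Fin k → ℕ)) :
    expWeight k θ s' = Real.exp (θ 0 * ((s'.1 : ℝ) - s.1)
      + ∑ i, θ i.succ * ((s'.2 i : ℝ) - s.2 i)) * expWeight k θ s := by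
  rw [expWeight, expWeight, ← Real.exp_add]
  congr 1
  simp only [mul_sub, Finset.sum_sub_distrib]
  ring

theorem expWeight_min_succ (m : ℕ) (y : Fin k → ℕ) :
    expWeight k θ (m + 1, fun j => y j - 1)
      = Real.exp (θ 0 - ∑ j ∈ (zeroSet k y)ᶜ, θ j.succ) * expWeight k θ (m, y) := by
  have hdec : ∀ j, θ j.succ * (((y j - 1 : ℕ) : ℝ) - y j) = -if y j ≠ 0 then θ j.succ else 0 := by
    intro j
    rcases eq_or_ne (y j) 0 with h | h
    · simp [h]
    · simp [h, Nat.cast_sub (Nat.one_le_iff_ne_zero.mpr h)]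
  rw [expWeight_eq_exp_mul θ (m, y), zeroSet, Finset.compl_filter, Finset.sum_filter]
  simp only [hdec, Finset.sum_neg_distrib]
  push_cast
  ring_nf

theorem expWeight_update_one (m : ℕ) {y : Fin k → ℕ} {i : Fin k} (hi : y i = 0) :
    expWeight k θ (m, Function.update y i 1) = Real.exp (θ i.succ) * expWeight k θ (m, y) := by
  rw [expWeight_eq_exp_mul θ (m, y), Finset.sum_eq_single i]
  · simp [hi]
  · intro j _ hj; simp [Function.update_of_ne hj]
  · simp

theorem expWeight_update_pred (m : ℕ) {y : Fin k → ℕ} {j : Fin k} (hj : y j ≠ 0) :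
    expWeight k θ (m, Function.update y j (y j - 1))
      = Real.exp (-θ j.succ) * expWeight k θ (m, y) := by
  rw [expWeight_eq_exp_mul θ (m, y), Finset.sum_eq_single j]
  · simp [Nat.cast_sub (Nat.one_le_iff_ne_zero.mpr hj)]
  · intro l _ hl; simp [Function.update_of_ne hl]
  · simp

theorem expWeight_min_pred {m : ℕ} (hm : m ≠ 0) {y : Fin k → ℕ} {i : Fin k} (hi : y i = 0) :
    expWeight k θ (m - 1, fun j => if j = i then 0 else y j + 1)
      = Real.exp (-θ 0 + ∑ j ∈ Finset.univ.erase i, θ j.succ) * expWeight k θ (m, y) := by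
  have hmin : ((m - 1 : ℕ) : ℝ) - m = -1 := by
    rw [Nat.cast_sub (Nat.one_le_iff_ne_zero.mpr hm)]; ring
  have hdiff : ∑ j, θ j.succ * (((if j = i then 0 else y j + 1 : ℕ) : ℝ) - y j)
      = ∑ j ∈ Finset.univ.erase i, θ j.succ := by
    rw [← Finset.add_sum_erase _ _ (Finset.mem_univ i)]
    simp only [if_pos, hi, sub_self, mul_zero, zero_add]
    refine Finset.sum_congr rfl fun j hj => ?_
    simp [Finset.ne_of_mem_erase hj]
  rw [expWeight_eq_exp_mul θ (m, y)]
  simp only [hmin, hdiff, mul_neg_one]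

@[simp]
theorem mem_zeroSet {y : Fin k → ℕ} {i : Fin k} : i ∈ zeroSet k y ↔ y i = 0 := by
  simp [zeroSet]

noncomputable def gammaAt (lam : ℝ) (μ : Fin k → ℝ) (θ : Fin (k + 1) → ℝ)
    (s : ℕ × (Fin k → ℕ)) : ℝ :=
  if s.1 = 0 then gammaZero k lam μ (zeroSet k s.2) θ else gammaPlus k lam μ (zeroSet k s.2) θ

section Increments

variable (m : ℕ) (y : Fin k → ℕ)

theorem hasSum_arrival_mul_expWeight :
    HasSum (fun s' => (if (zeroSet k y).card = 1
        then (if s' = (m + 1, fun j => y j - 1) then lam else 0)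
        else ∑ i ∈ zeroSet k y,
          if s' = (m, Function.update y i 1) then lam / (zeroSet k y).card else 0)
          * expWeight k θ s')
      ((if (zeroSet k y).card = 1 then lam * Real.exp (θ 0 - ∑ j ∈ (zeroSet k y)ᶜ, θ j.succ)
        else ∑ i ∈ zeroSet k y, lam / (zeroSet k y).card * Real.exp (θ i.succ))
          * expWeight k θ (m, y)) := by
  split_ifs
  · rw [mul_assoc, ← expWeight_min_succ]
    exact hasSum_ite_eq_mul _ lam (expWeight k θ)
  · rw [Finset.sum_mul, Finset.sum_congr rfl fun i hi => by
      rw [mul_assoc, ← expWeight_update_one θ m (mem_zeroSet.mp hi)]]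
    exact hasSum_sum_ite_eq_mul _ _ (fun _ => lam / (zeroSet k y).card) (expWeight k θ)

theorem hasSum_departure_mul_expWeight :
    HasSum (fun s' => (∑ j ∈ (zeroSet k y)ᶜ,
        if s' = (m, Function.update y j (y j - 1)) then μ j else 0) * expWeight k θ s')
      ((∑ j ∈ (zeroSet k y)ᶜ, μ j * Real.exp (-θ j.succ)) * expWeight k θ (m, y)) := by
  rw [Finset.sum_mul, Finset.sum_congr rfl fun j hj => by
    rw [mul_assoc, ← expWeight_update_pred θ m (by simpa using hj)]]
  exact hasSum_sum_ite_eq_mul _ _ μ (expWeight k θ)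

theorem hasSum_service_mul_expWeight :
    HasSum (fun s' => (∑ i ∈ zeroSet k y, if s' = (if m = 0 then (m, y)
          else (m - 1, fun j => if j = i then 0 else y j + 1)) then μ i else 0)
          * expWeight k θ s')
      ((if m = 0 then ∑ i ∈ zeroSet k y, μ i
        else ∑ i ∈ zeroSet k y, μ i * Real.exp (-θ 0 + ∑ j ∈ Finset.univ.erase i, θ j.succ))
          * expWeight k θ (m, y)) := by
  split_ifs with hm
  · rw [Finset.sum_mul]
    exact hasSum_sum_ite_eq_mul _ _ μ (expWeight k θ)
  · rw [Finset.sum_mul, Finset.sum_congr rfl fun i hi => by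
      rw [mul_assoc, ← expWeight_min_pred θ hm (mem_zeroSet.mp hi)]]
    exact hasSum_sum_ite_eq_mul _ _ μ (expWeight k θ)

end Increments

theorem hasSum_jsqP_mul_expWeight (s : ℕ × (Fin k → ℕ)) :
    HasSum (fun s' => jsqP k lam μ s s' * expWeight k θ s')
      (gammaAt lam μ θ s * expWeight k θ s) := by
  obtain ⟨m, y⟩ := s
  convert ((hasSum_arrival_mul_expWeight (lam := lam) θ m y).add
    (hasSum_departure_mul_expWeight (μ := μ) θ m y)).add
    (hasSum_service_mul_expWeight (μ := μ) θ m y)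
    using 1
  · ext s'
    simp only [jsqP, add_mul]
  · simp only [gammaAt, gammaPlus, gammaZero]
    split_ifs <;> ring

theorem jsqP_nonneg (hlam : 0 ≤ lam) (hμ : ∀ i, 0 ≤ μ i) (s s' : ℕ × (Fin k → ℕ)) :
    0 ≤ jsqP k lam μ s s' := by
  have hite : ∀ {p : Prop} [Decidable p] {c : ℝ}, 0 ≤ c → 0 ≤ if p then c else 0 := by
    intro p _ c hc; split_ifs <;> simp [hc]
  unfold jsqP
  refine add_nonneg (add_nonneg ?_ (Finset.sum_nonneg fun j _ => hite (hμ j)))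
    (Finset.sum_nonneg fun i _ => hite (hμ i))
  split
  · exact hite hlam
  · exact Finset.sum_nonneg fun i _ => hite (div_nonneg hlam (Nat.cast_nonneg _))

theorem gammaAt_nonneg (hlam : 0 ≤ lam) (hμ : ∀ i, 0 ≤ μ i) (s : ℕ × (Fin k → ℕ)) :
    0 ≤ gammaAt lam μ θ s :=
  nonneg_of_mul_nonneg_left ((hasSum_jsqP_mul_expWeight θ s).nonneg fun s' =>
    mul_nonneg (jsqP_nonneg hlam hμ s s') (expWeight_pos θ _).le) (expWeight_pos θ s)

theorem gammaAt_zero (hnorm : lam + ∑ i, μ i = 1) {s : ℕ × (Fin k → ℕ)}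
    (hs : (zeroSet k s.2).Nonempty) : gammaAt lam μ 0 s = 1 := by
  have hcard : ((zeroSet k s.2).card : ℝ) ≠ 0 := by simpa using hs.ne_empty
  rw [← hnorm, ← Finset.sum_add_sum_compl (zeroSet k s.2) μ]
  simp only [gammaAt, gammaPlus, gammaZero]
  split_ifs <;> simp [mul_div_cancel₀ _ hcard] <;> ring

theorem tsum_ofReal_jsqP_mul_expWeight (hlam : 0 ≤ lam) (hμ : ∀ i, 0 ≤ μ i)
    (s : ℕ × (Fin k → ℕ)) :
    ∑' s', ENNReal.ofReal (jsqP k lam μ s s') * ENNReal.ofReal (expWeight k θ s')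
      = ENNReal.ofReal (gammaAt lam μ θ s) * ENNReal.ofReal (expWeight k θ s) := by
  simp_rw [← ENNReal.ofReal_mul (jsqP_nonneg hlam hμ s _),
    ← ENNReal.ofReal_mul (gammaAt_nonneg θ hlam hμ s)]
  have h := hasSum_jsqP_mul_expWeight (lam := lam) (μ := μ) θ s
  rw [← ENNReal.ofReal_tsum_of_nonneg (fun s' => mul_nonneg (jsqP_nonneg hlam hμ s s')
    (expWeight_pos θ _).le) h.summable, h.tsum_eq]

theorem tsum_ofReal_jsqP (hlam : 0 ≤ lam) (hμ : ∀ i, 0 ≤ μ i) (hnorm : lam + ∑ i, μ i = 1)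
    {s : ℕ × (Fin k → ℕ)} (hs : (zeroSet k s.2).Nonempty) :
    ∑' s', ENNReal.ofReal (jsqP k lam μ s s') = 1 := by
  simpa [expWeight, gammaAt_zero hnorm hs] using tsum_ofReal_jsqP_mul_expWeight 0 hlam hμ s

theorem tsum_ofReal_mul_expWeight_mul_ite (π : ℕ × (Fin k → ℕ) → ℝ)
    (c d : Finset (Fin k) → ℝ≥0∞) :
    ∑' s, ENNReal.ofReal (π s * expWeight k θ s)
        * (if s.1 = 0 then d (zeroSet k s.2) else c (zeroSet k s.2))
      = ∑ U, (c U * phiPlus k π U θ + d U * phiZero k π U θ) := by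
  simp only [phiPlus, phiZero, ← ENNReal.tsum_mul_left, ← ENNReal.tsum_add]
  rw [← Summable.tsum_finsetSum fun _ _ => ENNReal.summable]
  refine tsum_congr fun s => ?_
  rcases eq_or_ne s.1 0 with hm | hm
  · simp [hm, eq_comm (a := zeroSet k s.2), mul_comm]
  · simp [hm, Nat.one_le_iff_ne_zero.mpr hm, eq_comm (a := zeroSet k s.2), mul_comm]

variable {π : ℕ × (Fin k → ℕ) → ℝ}

theorem phiPlus_empty (hsupp : ∀ s, π s ≠ 0 → (zeroSet k s.2).Nonempty) :
    phiPlus k π ∅ θ = 0 := by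
  refine ENNReal.tsum_eq_zero.mpr fun s => ?_
  rcases eq_or_ne (π s) 0 with hs | hs
  · simp [hs]
  · simp [(hsupp s hs).ne_empty]

theorem phiZero_empty (hsupp : ∀ s, π s ≠ 0 → (zeroSet k s.2).Nonempty) :
    phiZero k π ∅ θ = 0 := by
  refine ENNReal.tsum_eq_zero.mpr fun s => ?_
  rcases eq_or_ne (π s) 0 with hs | hs
  · simp [hs]
  · simp [(hsupp s hs).ne_empty]

theorem tsum_ofReal_mul_jsqP (hlam : 0 ≤ lam) (hμ : ∀ i, 0 ≤ μ i) (hnorm : lam + ∑ i, μ i = 1)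
    (hπnn : ∀ s, 0 ≤ π s) (hsupp : ∀ s, π s ≠ 0 → (zeroSet k s.2).Nonempty)
    (hπsum : Summable π) (hπstat : ∀ s', ∑' s, π s * jsqP k lam μ s s' = π s')
    (s' : ℕ × (Fin k → ℕ)) :
    ∑' s, ENNReal.ofReal (π s) * ENNReal.ofReal (jsqP k lam μ s s') = ENNReal.ofReal (π s') := by
  have hle : ∀ s, π s * jsqP k lam μ s s' ≤ π s := by
    intro s
    rcases eq_or_ne (π s) 0 with hs | hs
    · simp [hs]
    refine mul_le_of_le_one_right (hπnn s) (ENNReal.ofReal_le_one.mp ?_)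
    exact (ENNReal.le_tsum s').trans (tsum_ofReal_jsqP hlam hμ hnorm (hsupp s hs)).le
  have hnn : ∀ s, 0 ≤ π s * jsqP k lam μ s s' :=
    fun s => mul_nonneg (hπnn s) (jsqP_nonneg hlam hμ s s')
  simp_rw [← ENNReal.ofReal_mul (hπnn _)]
  rw [← ENNReal.ofReal_tsum_of_nonneg hnn (hπsum.of_nonneg_of_le hnn hle), hπstat]

theorem tsum_ofReal_mul_gammaAt_eq_sum (hπnn : ∀ s, 0 ≤ π s)
    (hsupp : ∀ s, π s ≠ 0 → (zeroSet k s.2).Nonempty) (g : ℝ → ℝ≥0∞) :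
    ∑' s, ENNReal.ofReal (π s) * (g (gammaAt lam μ θ s) * ENNReal.ofReal (expWeight k θ s))
      = ∑ U ∈ Finset.univ.filter (fun U : Finset (Fin k) => U.Nonempty),
          (g (gammaPlus k lam μ U θ) * phiPlus k π U θ
            + g (gammaZero k lam μ U θ) * phiZero k π U θ) := by
  rw [Finset.sum_filter_of_ne fun U _ hU => ?_, ← tsum_ofReal_mul_expWeight_mul_ite]
  · refine tsum_congr fun s => ?_
    rw [ENNReal.ofReal_mul (hπnn s), gammaAt, apply_ite g]
    ring
  · rw [Finset.nonempty_iff_ne_empty]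
    rintro rfl
    simp [phiPlus_empty θ hsupp, phiZero_empty θ hsupp] at hU

theorem sum_ofReal_one_sub_gamma_mul_phi_le (hlam : 0 ≤ lam) (hμ : ∀ i, 0 ≤ μ i)
    (hnorm : lam + ∑ i, μ i = 1) (hπnn : ∀ s, 0 ≤ π s)
    (hsupp : ∀ s, π s ≠ 0 → (zeroSet k s.2).Nonempty) (hπsum : HasSum π 1)
    (hπstat : ∀ s', ∑' s, π s * jsqP k lam μ s s' = π s') :
    ∑ U ∈ Finset.univ.filter (fun U : Finset (Fin k) => U.Nonempty),
        (ENNReal.ofReal (1 - gammaPlus k lam μ U θ) * phiPlus k π U θ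
          + ENNReal.ofReal (1 - gammaZero k lam μ U θ) * phiZero k π U θ)
      ≤ ∑ U ∈ Finset.univ.filter (fun U : Finset (Fin k) => U.Nonempty),
        (ENNReal.ofReal (gammaPlus k lam μ U θ - 1) * phiPlus k π U θ
          + ENNReal.ofReal (gammaZero k lam μ U θ - 1) * phiZero k π U θ) := by
  rw [← tsum_ofReal_mul_gammaAt_eq_sum θ hπnn hsupp fun g => ENNReal.ofReal (1 - g),
    ← tsum_ofReal_mul_gammaAt_eq_sum θ hπnn hsupp fun g => ENNReal.ofReal (g - 1)]
  have hπ : ∑' s, ENNReal.ofReal (π s) ≠ ∞ := by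
    rw [← ENNReal.ofReal_tsum_of_nonneg hπnn hπsum.summable]
    exact ENNReal.ofReal_ne_top
  refine tsum_mul_le_of_drift (V := fun s => ENNReal.ofReal (expWeight k θ s)) hπ
    (tsum_ofReal_mul_jsqP hlam hμ hnorm hπnn hsupp hπsum.summable hπstat)
    (fun s hs => (tsum_ofReal_jsqP hlam hμ hnorm (hsupp s fun h => hs (by simp [h]))).le)
    (fun _ => ENNReal.ofReal_ne_top) fun s _ => le_of_eq ?_
  rw [tsum_ofReal_jsqP_mul_expWeight θ hlam hμ, ← add_mul,
    ENNReal.ofReal_add_ofReal_one_sub (gammaAt_nonneg θ hlam hμ s), add_mul, one_mul]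

end JSQ

theorem jsq_stationary_inequality_b_general
    (k : ℕ) (lam : ℝ) (μ : Fin k → ℝ)
    (hlam : 0 < lam) (hμ : ∀ i, 0 < μ i)
    (hnorm : lam + ∑ i, μ i = 1)
    (π : ℕ × (Fin k → ℕ) → ℝ)
    (hπnn : ∀ s, 0 ≤ π s)
    (hπsupp : ∀ s, π s ≠ 0 → ∃ i : Fin k, s.2 i = 0)
    (hπsum : HasSum π 1)
    (hπstat : ∀ s', (∑' s, π s * jsqP k lam μ s s') = π s')
    (θ : Fin (k + 1) → ℝ)
    (A : Finset (Finset (Fin k)))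
    (hA : ∀ U ∈ A, Finset.Nonempty U)
    (hγ : ∀ U : Finset (Fin k), U.Nonempty → U ∉ A →
      gammaPlus k lam μ U θ < 1 ∧ gammaZero k lam μ U θ < 1)
    (hfin : ∀ U ∈ A, phiPlus k π U θ < ⊤ ∧ phiZero k π U θ < ⊤) :
    (∀ U : Finset (Fin k), U.Nonempty → U ∉ A →
        phiPlus k π U θ < ⊤ ∧ phiZero k π U θ < ⊤) ∧
    (∑ U ∈ (Finset.univ.filter (fun U : Finset (Fin k) => U.Nonempty)) \ A,
        ((1 - gammaPlus k lam μ U θ) * (phiPlus k π U θ).toReal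
          + (1 - gammaZero k lam μ U θ) * (phiZero k π U θ).toReal))
      ≤ ∑ U ∈ A,
          ((gammaPlus k lam μ U θ - 1) * (phiPlus k π U θ).toReal
            + (gammaZero k lam μ U θ - 1) * (phiZero k π U θ).toReal) := by
  have hdrift := JSQ.sum_ofReal_one_sub_gamma_mul_phi_le θ hlam.le (fun i => (hμ i).le) hnorm
    hπnn (fun s hs => (hπsupp s hs).imp fun _ => JSQ.mem_zeroSet.mpr) hπsum hπstat
  simp only [← neg_sub (1 : ℝ)] at hdrift
  have hfinite := ne_top_of_sum_ofReal_mul_le (B := A)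
    (fun U hU => ⟨(hfin U hU).1.ne, (hfin U hU).2.ne⟩)
    (fun U hU hUA => (hγ U (Finset.mem_filter.mp hU).2 hUA).imp sub_pos.2 sub_pos.2) hdrift
  refine ⟨fun U hU _ => ?_, ?_⟩
  · obtain ⟨hplus, hzero⟩ := hfinite U (Finset.mem_filter.mpr ⟨Finset.mem_univ U, hU⟩)
    exact ⟨hplus.lt_top, hzero.lt_top⟩
  have hnet := sum_mul_toReal_nonpos_of_sum_ofReal_mul_le hfinite hdrift
  rw [← Finset.sum_sdiff fun U hU => Finset.mem_filter.mpr ⟨Finset.mem_univ U, hA U hU⟩] at hnet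
  have hneg : ∀ U ∈ A, (gammaPlus k lam μ U θ - 1) * (phiPlus k π U θ).toReal
      + (gammaZero k lam μ U θ - 1) * (phiZero k π U θ).toReal
      = -((1 - gammaPlus k lam μ U θ) * (phiPlus k π U θ).toReal
        + (1 - gammaZero k lam μ U θ) * (phiZero k π U θ).toReal) := fun U _ => by ring
  rw [Finset.sum_congr rfl hneg, Finset.sum_neg_distrib]
  linarith

/-- **Stationary inequality (b):** with `𝒜 ⊆ 𝒦`, if `γ_{+U}(θ), γ_{0U}(θ) < 1` for
`U ∈ 𝒦∖𝒜` and `φ_{+U'}(θ), φ_{0U'}(θ) < ∞` for `U' ∈ 𝒜`, then the `φ`'s over `𝒦∖𝒜`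
are finite and
`Σ_{𝒦∖𝒜} [(1−γ_{+U})φ_{+U} + (1−γ_{0U})φ_{0U}] ≤ Σ_{𝒜} [(γ_{+U'}−1)φ_{+U'} + (γ_{0U'}−1)φ_{0U'}] < ∞`. -/
theorem jsq_stationary_inequality_b
    (k : ℕ) (hk : 2 ≤ k) (lam : ℝ) (μ : Fin k → ℝ)
    (hlam : 0 < lam) (hμ : ∀ i, 0 < μ i)
    (hnorm : lam + ∑ i, μ i = 1)
    (hρ : rho k lam μ < 1)
    (π : ℕ × (Fin k → ℕ) → ℝ)
    (hπnn : ∀ s, 0 ≤ π s)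
    (hπsupp : ∀ s, π s ≠ 0 → ∃ i : Fin k, s.2 i = 0)
    (hπsum : HasSum π 1)
    (hπstat : ∀ s', (∑' s, π s * jsqP k lam μ s s') = π s')
    (θ : Fin (k + 1) → ℝ)
    (A : Finset (Finset (Fin k)))
    (hA : ∀ U ∈ A, Finset.Nonempty U)
    (hγ : ∀ U : Finset (Fin k), U.Nonempty → U ∉ A →
      gammaPlus k lam μ U θ < 1 ∧ gammaZero k lam μ U θ < 1)
    (hfin : ∀ U ∈ A, phiPlus k π U θ < ⊤ ∧ phiZero k π U θ < ⊤) :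
    (∀ U : Finset (Fin k), U.Nonempty → U ∉ A →
        phiPlus k π U θ < ⊤ ∧ phiZero k π U θ < ⊤) ∧
    (∑ U ∈ (Finset.univ.filter (fun U : Finset (Fin k) => U.Nonempty)) \ A,
        ((1 - gammaPlus k lam μ U θ) * (phiPlus k π U θ).toReal
          + (1 - gammaZero k lam μ U θ) * (phiZero k π U θ).toReal))
      ≤ ∑ U ∈ A,
          ((gammaPlus k lam μ U θ - 1) * (phiPlus k π U θ).toReal
            + (gammaZero k lam μ U θ - 1) * (phiZero k π U θ).toReal) :=
  jsq_stationary_inequality_b_general k lam μ hlam hμ hnorm π hπnn hπsupp hπsum hπstat θ A hA hγ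
    hfin
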